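/- arXiv:2110.14096 — 6 statements merged into one kernel-verified Lean document; each statement's English description precedes it below -/
import Mathlib

section
/- The bisimulation operator F, mapping a bounded function D : S × S → ℝ to F(D)(s,t) = c_R·|r(s) − r(t)| + c_T·D(f(s), f(t)), has a unique bounded fixed point, and this fixed point is given explicitly by the series d(s,t) = c_R · ∑_{n=0}^∞ c_T^n · |r(f^n(s)) − r(f^n(t))|; that is, d is bounded, satisfies d(s,t) = c_R·|r(s) − r(t)| + c_T·d(f(s), f(t)) for all s,t ∈ S, and any bounded function D : S × S → ℝ satisfying D(s,t) = c_R·|r(s) − r(t)| + c_T·D(f(s), f(t)) for all s,t ∈ S equals d. -/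
/-!
Viewing pairs `(s, t)` as states of the product system `Prod.map f f` with reward
`c_R |r s - r t|`, the series `d` is the discounted value of that reward along the orbit of
`(s, t)`. Splitting off the first term of the series gives the fixed-point equation. If `D` is
another bounded fixed point, `E = D - d` satisfies `E (s, t) = c_T E (f s, f t)`, hence
`|E| ≤ c_T^n sup |E|` for every `n`, and `E = 0`.
-/

/-- The deterministic on-policy bisimulation metric
`d(s,t) = c_R · ∑_{n} c_T^n · |r(f^n s) − r(f^n t)|`. -/
noncomputable def bisimD {S : Type*} (f : S → S) (r : S → ℝ) (cR cT : ℝ)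
    (s t : S) : ℝ :=
  cR * ∑' n : ℕ, cT ^ n * |r (f^[n] s) - r (f^[n] t)|

open Filter Topology

namespace Function

variable {α : Type*} (g : α → α) (c : ℝ) (u : α → ℝ)

noncomputable def discountedSum (x : α) : ℝ :=
  ∑' n : ℕ, c ^ n * u (g^[n] x)

variable {g c u} {B : ℝ}

theorem norm_pow_mul_comp_iterate_le (hu : ∀ x, |u x| ≤ B) (x : α) (n : ℕ) :
    ‖c ^ n * u (g^[n] x)‖ ≤ B * |c| ^ n := by
  rw [Real.norm_eq_abs, abs_mul, abs_pow, mul_comm]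
  exact mul_le_mul_of_nonneg_right (hu _) (pow_nonneg (abs_nonneg c) n)

theorem summable_pow_mul_comp_iterate (hc : |c| < 1) (hu : ∀ x, |u x| ≤ B) (x : α) :
    Summable fun n : ℕ => c ^ n * u (g^[n] x) :=
  .of_norm_bounded ((summable_geometric_of_lt_one (abs_nonneg c) hc).mul_left B)
    (norm_pow_mul_comp_iterate_le hu x)

theorem abs_discountedSum_le (hc : |c| < 1) (hu : ∀ x, |u x| ≤ B) (x : α) :
    |discountedSum g c u x| ≤ B / (1 - |c|) :=
  tsum_of_norm_bounded ((hasSum_geometric_of_lt_one (abs_nonneg c) hc).mul_left B)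
    (norm_pow_mul_comp_iterate_le hu x)

theorem discountedSum_eq_add (hc : |c| < 1) (hu : ∀ x, |u x| ≤ B) (x : α) :
    discountedSum g c u x = u x + c * discountedSum g c u (g x) := by
  rw [discountedSum, (summable_pow_mul_comp_iterate hc hu x).tsum_eq_zero_add, discountedSum,
    ← tsum_mul_left]
  simp only [pow_zero, one_mul, iterate_zero_apply, pow_succ, iterate_succ_apply]
  congr 2 with n
  ring

theorem eq_zero_of_abs_le_of_eq_mul_comp {E : α → ℝ} (hc : |c| < 1) (hE : ∀ x, |E x| ≤ B)
    (hEg : ∀ x, E x = c * E (g x)) (x : α) : E x = 0 := by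
  have iterate_eq : ∀ n x, E x = c ^ n * E (g^[n] x) := by
    intro n
    induction n with
    | zero => simp
    | succ n ih =>
      intro x
      rw [ih, hEg (g^[n] x), ← iterate_succ_apply' g, pow_succ, mul_assoc]
  have bound : ∀ n : ℕ, |E x| ≤ |c| ^ n * B := fun n => by
    rw [iterate_eq n x, abs_mul, abs_pow]
    exact mul_le_mul_of_nonneg_left (hE _) (pow_nonneg (abs_nonneg c) n)
  have decay : Tendsto (fun n : ℕ => |c| ^ n * B) atTop (𝓝 0) := by
    simpa using (tendsto_pow_atTop_nhds_zero_of_lt_one (abs_nonneg c) hc).mul_const B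
  exact abs_nonpos_iff.mp (ge_of_tendsto' decay bound)

theorem eq_discountedSum_of_eq_add {V : α → ℝ} {B' : ℝ} (hc : |c| < 1) (hu : ∀ x, |u x| ≤ B)
    (hV : ∀ x, |V x| ≤ B') (hVg : ∀ x, V x = u x + c * V (g x)) (x : α) :
    V x = discountedSum g c u x := by
  have hE : ∀ x, |V x - discountedSum g c u x| ≤ B' + B / (1 - |c|) := fun x =>
    (abs_sub _ _).trans (add_le_add (hV x) (abs_discountedSum_le hc hu x))
  have hEg : ∀ x, V x - discountedSum g c u x = c * (V (g x) - discountedSum g c u (g x)) :=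
    fun x => by rw [hVg x, discountedSum_eq_add hc hu x]; ring
  exact sub_eq_zero.mp (eq_zero_of_abs_le_of_eq_mul_comp hc hE hEg x)

end Function

open Function

theorem bisimD_eq_discountedSum {S : Type*} (f : S → S) (r : S → ℝ) (cR cT : ℝ) (s t : S) :
    bisimD f r cR cT s t =
      discountedSum (Prod.map f f) cT (fun p => cR * |r p.1 - r p.2|) (s, t) := by
  simp only [bisimD, discountedSum, Prod.map_iterate, Prod.map_apply, ← tsum_mul_left]
  congr 1 with n
  ring

theorem abs_mul_abs_sub_le {S : Type*} {r : S → ℝ} {M : ℝ} (hr : ∀ s, |r s| ≤ M) (cR : ℝ)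
    (s t : S) : abs (cR * |r s - r t|) ≤ |cR| * (2 * M) := by
  rw [abs_mul, abs_abs]
  gcongr
  linarith [abs_sub (r s) (r t), hr s, hr t]

theorem bisim_fixed_point_unique_general
    {S : Type*} (f : S → S) (r : S → ℝ)
    (hr : ∃ M, ∀ s, |r s| ≤ M)
    (cR cT : ℝ) (hcT0 : 0 ≤ cT) (hcT1 : cT < 1) :
    (∃ M, ∀ s t, |bisimD f r cR cT s t| ≤ M) ∧
    (∀ s t, bisimD f r cR cT s t =
      cR * |r s - r t| + cT * bisimD f r cR cT (f s) (f t)) ∧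
    (∀ D : S → S → ℝ, (∃ M, ∀ s t, |D s t| ≤ M) →
      (∀ s t, D s t = cR * |r s - r t| + cT * D (f s) (f t)) →
      ∀ s t, D s t = bisimD f r cR cT s t) := by
  obtain ⟨M, hM⟩ := hr
  have hcT : |cT| < 1 := abs_lt.mpr ⟨by linarith, hcT1⟩
  have hu : ∀ p : S × S, abs (cR * |r p.1 - r p.2|) ≤ |cR| * (2 * M) := fun p =>
    abs_mul_abs_sub_le hM cR p.1 p.2
  simp only [bisimD_eq_discountedSum]
  refine ⟨⟨_, fun s t => abs_discountedSum_le hcT hu (s, t)⟩,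
    fun s t => discountedSum_eq_add hcT hu (s, t), ?_⟩
  rintro D ⟨MD, hMD⟩ hD s t
  exact eq_discountedSum_of_eq_add (g := Prod.map f f) (V := fun p => D p.1 p.2) hcT hu
    (fun p => hMD p.1 p.2) (fun p => hD p.1 p.2) (s, t)

/-- The bisimulation operator has a unique bounded fixed point, given
explicitly by the series `d`: `d` is bounded, satisfies the fixed-point equation, and
any bounded function satisfying the fixed-point equation equals `d`. -/
theorem bisim_fixed_point_unique
    {S : Type*} [Nonempty S] (f : S → S) (r : S → ℝ)
    (hr : ∃ M, ∀ s, |r s| ≤ M)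
    (cR cT : ℝ) (hcR : 0 ≤ cR) (hcT0 : 0 ≤ cT) (hcT1 : cT < 1) :
    (∃ M, ∀ s t, |bisimD f r cR cT s t| ≤ M) ∧
    (∀ s t, bisimD f r cR cT s t =
      cR * |r s - r t| + cT * bisimD f r cR cT (f s) (f t)) ∧
    (∀ D : S → S → ℝ, (∃ M, ∀ s t, |D s t| ≤ M) →
      (∀ s t, D s t = cR * |r s - r t| + cT * D (f s) (f t)) →
      ∀ s t, D s t = bisimD f r cR cT s t) :=
  bisim_fixed_point_unique_general f r hr cR cT hcT0 hcT1
end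

section
/- Value difference bound (c_T ≥ γ case): assume γ ≤ c_T. Then the bisimulation distance between a pair of states upper-bounds the scaled difference in their values: c_R·|V(s) − V(t)| ≤ d(s,t) for all s, t ∈ S. -/
noncomputable def valueV {S : Type*} (f : S → S) (r : S → ℝ) (γ : ℝ) (s : S) : ℝ :=
  ∑' n : ℕ, γ ^ n * r (f^[n] s)

/-!
Both `V s - V t` and `d(s,t) / c_R` are geometrically weighted series of the reward differences
`r (f^[n] s) - r (f^[n] t)`, with weights `γ ^ n` and `c_T ^ n` respectively. The triangle
inequality for series and `γ ^ n ≤ c_T ^ n` compare them term by term.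
-/

section GeometricWeights

variable {a : ℕ → ℝ} {M c γ : ℝ}

lemma summable_pow_mul_of_abs_le (hc0 : 0 ≤ c) (hc1 : c < 1) (ha : ∀ n, |a n| ≤ M) :
    Summable fun n => c ^ n * a n :=
  .of_norm_bounded ((summable_geometric_of_lt_one hc0 hc1).mul_right M) fun n => by
    rw [norm_mul, norm_pow, Real.norm_of_nonneg hc0, Real.norm_eq_abs]
    exact mul_le_mul_of_nonneg_left (ha n) (pow_nonneg hc0 n)

lemma abs_tsum_pow_mul_le_tsum_pow_mul_abs (hγ0 : 0 ≤ γ) (hγc : γ ≤ c) (hc1 : c < 1)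
    (ha : ∀ n, |a n| ≤ M) :
    |∑' n, γ ^ n * a n| ≤ ∑' n, c ^ n * |a n| := by
  have hsum : Summable fun n => c ^ n * |a n| :=
    summable_pow_mul_of_abs_le (hγ0.trans hγc) hc1 fun n => (abs_abs (a n)).trans_le (ha n)
  rw [← Real.norm_eq_abs]
  refine tsum_of_norm_bounded hsum.hasSum fun n => ?_
  rw [Real.norm_eq_abs, abs_mul, abs_pow, abs_of_nonneg hγ0]
  exact mul_le_mul_of_nonneg_right (pow_le_pow_left₀ hγ0 hγc n) (abs_nonneg _)

end GeometricWeights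

section DeterministicMDP

variable {S : Type*} {f : S → S} {r : S → ℝ} {M γ : ℝ}

lemma valueV_sub_valueV (hr : ∀ s, |r s| ≤ M) (hγ0 : 0 ≤ γ) (hγ1 : γ < 1) (s t : S) :
    valueV f r γ s - valueV f r γ t = ∑' n, γ ^ n * (r (f^[n] s) - r (f^[n] t)) := by
  simp only [valueV, mul_sub]
  exact (Summable.tsum_sub (summable_pow_mul_of_abs_le hγ0 hγ1 fun n => hr _)
    (summable_pow_mul_of_abs_le hγ0 hγ1 fun n => hr _)).symm

end DeterministicMDP

theorem value_diff_le_bisim_general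
    {S : Type*} (f : S → S) (r : S → ℝ)
    (hr : ∃ M, ∀ s, |r s| ≤ M)
    (cR cT γ : ℝ) (hcR : 0 ≤ cR) (hcT1 : cT < 1)
    (hγ0 : 0 ≤ γ) (hγcT : γ ≤ cT) :
    ∀ s t : S, cR * |valueV f r γ s - valueV f r γ t| ≤ bisimD f r cR cT s t := by
  obtain ⟨M, hM⟩ := hr
  intro s t
  rw [valueV_sub_valueV hM hγ0 (hγcT.trans_lt hcT1), bisimD]
  have hdiff : ∀ n, |r (f^[n] s) - r (f^[n] t)| ≤ M + M := fun n =>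
    (abs_sub _ _).trans (add_le_add (hM _) (hM _))
  exact mul_le_mul_of_nonneg_left (abs_tsum_pow_mul_le_tsum_pow_mul_abs hγ0 hγcT hcT1 hdiff) hcR

/-- Value difference bound (`c_T ≥ γ` case): if `γ ≤ c_T`, the
bisimulation distance upper-bounds the scaled value difference:
`c_R·|V s − V t| ≤ d(s,t)`. -/
theorem value_diff_le_bisim
    {S : Type*} [Nonempty S] (f : S → S) (r : S → ℝ)
    (hr : ∃ M, ∀ s, |r s| ≤ M)
    (cR cT γ : ℝ) (hcR : 0 ≤ cR) (hcT0 : 0 ≤ cT) (hcT1 : cT < 1)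
    (hγ0 : 0 ≤ γ) (hγ1 : γ < 1) (hγcT : γ ≤ cT) :
    ∀ s t : S, cR * |valueV f r γ s - valueV f r γ t| ≤ bisimD f r cR cT s t :=
  value_diff_le_bisim_general f r hr cR cT γ hcR hcT1 hγ0 hγcT
end

section
/- Relating embedding collapse and low-dispersion rewards: assume f preserves the probability measure ρ (the pushforward of ρ under f equals ρ). Then the mean bisimulation distance equals c_R/(1 − c_T) times the mean reward difference: ∫_{S×S} d(s,t) dν(s,t) = (c_R/(1 − c_T)) · ∫_{S×S} |r(s) − r(t)| dν(s,t), where ν := ρ × ρ is the product measure. In particular, if the mean reward difference is zero, the mean bisimulation distance is zero. -/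
/-
Since `f` preserves `ρ`, each `f^[n] × f^[n]` preserves `ν = ρ × ρ`, so every term
`c_T^n |r (f^n s) - r (f^n t)|` of the series defining `d` has `ν`-mean `c_T^n` times the mean
reward difference. The series of these means converges absolutely, so integral and sum
commute, and summing the geometric series gives the factor `1/(1 - c_T)`.
-/

open MeasureTheory

namespace MeasureTheory.MeasurePreserving

variable {α β : Type*} [MeasurableSpace α] [MeasurableSpace β] {μ : Measure α} {ν : Measure β}

theorem integral_comp_of_aestronglyMeasurable {E : Type*} [NormedAddCommGroup E]
    [NormedSpace ℝ E] {T : α → β} (hT : MeasurePreserving T μ ν) {g : β → E} (hg : AEStronglyMeasurable g ν) :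
    ∫ x, g (T x) ∂μ = ∫ y, g y ∂ν := by
  rw [← integral_map hT.aemeasurable (hT.map_eq ▸ hg), hT.map_eq]

theorem integral_tsum_geometric_mul_comp_iterate {T : α → α} (hT : MeasurePreserving T μ μ)
    {g : α → ℝ} (hg : Integrable g μ) {c : ℝ} (hc : |c| < 1) :
    ∫ x, ∑' n : ℕ, c ^ n * g (T^[n] x) ∂μ = (1 - c)⁻¹ * ∫ x, g x ∂μ := by
  have hmean (n : ℕ) {φ : α → ℝ} (hφ : AEStronglyMeasurable φ μ) :
      ∫ x, φ (T^[n] x) ∂μ = ∫ x, φ x ∂μ :=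
    (hT.iterate n).integral_comp_of_aestronglyMeasurable hφ
  have hterm_int (n : ℕ) : Integrable (fun x ↦ c ^ n * g (T^[n] x)) μ :=
    ((hT.iterate n).integrable_comp_of_integrable hg).const_mul _
  have hnorm_mean (n : ℕ) : ∫ x, ‖c ^ n * g (T^[n] x)‖ ∂μ = |c| ^ n * ∫ x, ‖g x‖ ∂μ := by
    simp only [norm_mul, norm_pow, Real.norm_eq_abs]
    rw [integral_const_mul, hmean n hg.abs.aestronglyMeasurable]
  have hsummable : Summable fun n : ℕ ↦ ∫ x, ‖c ^ n * g (T^[n] x)‖ ∂μ := by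
    simp only [hnorm_mean]
    exact (summable_geometric_of_abs_lt_one (by rwa [abs_abs])).mul_right _
  rw [← integral_tsum_of_summable_integral_norm hterm_int hsummable]
  simp only [integral_const_mul, hmean _ hg.aestronglyMeasurable]
  rw [tsum_mul_right, tsum_geometric_of_abs_lt_one hc]

end MeasureTheory.MeasurePreserving

theorem integrable_abs_sub_of_bounded {S : Type*} [MeasurableSpace S] {r : S → ℝ}
    (hrm : Measurable r) {M : ℝ} (hM : ∀ s, |r s| ≤ M)
    (ρ : Measure S) [IsFiniteMeasure ρ] :
    Integrable (fun p : S × S ↦ |r p.1 - r p.2|) (ρ.prod ρ) := by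
  have hr : Integrable r ρ := .of_bound hrm.aestronglyMeasurable M (.of_forall hM)
  exact ((hr.comp_fst ρ).sub (hr.comp_snd ρ)).abs

theorem mean_bisim_eq_mean_reward_diff_general
    {S : Type*} [MeasurableSpace S]
    (f : S → S) (hf : Measurable f)
    (r : S → ℝ) (hrm : Measurable r) (hr : ∃ M, ∀ s, |r s| ≤ M)
    (cR cT : ℝ) (hcT0 : 0 ≤ cT) (hcT1 : cT < 1)
    (ρ : Measure S) [IsProbabilityMeasure ρ]
    (hinv : Measure.map f ρ = ρ) :
    (∫ p : S × S, bisimD f r cR cT p.1 p.2 ∂(ρ.prod ρ)) =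
      cR / (1 - cT) * ∫ p : S × S, |r p.1 - r p.2| ∂(ρ.prod ρ) ∧
    ((∫ p : S × S, |r p.1 - r p.2| ∂(ρ.prod ρ)) = 0 →
      (∫ p : S × S, bisimD f r cR cT p.1 p.2 ∂(ρ.prod ρ)) = 0) := by
  obtain ⟨M, hM⟩ := hr
  have hρ : MeasurePreserving f ρ ρ := ⟨hf, hinv⟩
  have hmean : (∫ p : S × S, bisimD f r cR cT p.1 p.2 ∂(ρ.prod ρ)) =
      cR / (1 - cT) * ∫ p : S × S, |r p.1 - r p.2| ∂(ρ.prod ρ) := by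
    have hcT : |cT| < 1 := abs_lt.mpr ⟨by linarith, hcT1⟩
    have hdiscounted := (hρ.prod hρ).integral_tsum_geometric_mul_comp_iterate
      (integrable_abs_sub_of_bounded hrm hM ρ) hcT
    simp only [Prod.map_iterate, Prod.map_fst, Prod.map_snd] at hdiscounted
    simp only [bisimD, integral_const_mul, hdiscounted, div_eq_mul_inv, mul_assoc]
  exact ⟨hmean, fun h ↦ by rw [hmean, h, mul_zero]⟩

/-- Relating embedding collapse and low-dispersion rewards: if `f`
preserves the probability measure `ρ`, then the mean bisimulation distance equals
`c_R/(1 − c_T)` times the mean reward difference, where `ν = ρ × ρ`. In particular, a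
zero mean reward difference forces a zero mean bisimulation distance. -/
theorem mean_bisim_eq_mean_reward_diff
    {S : Type*} [MeasurableSpace S] [Nonempty S]
    (f : S → S) (hf : Measurable f)
    (r : S → ℝ) (hrm : Measurable r) (hr : ∃ M, ∀ s, |r s| ≤ M)
    (cR cT : ℝ) (hcR : 0 ≤ cR) (hcT0 : 0 ≤ cT) (hcT1 : cT < 1)
    (ρ : Measure S) [IsProbabilityMeasure ρ]
    (hinv : Measure.map f ρ = ρ) :
    (∫ p : S × S, bisimD f r cR cT p.1 p.2 ∂(ρ.prod ρ)) =
      cR / (1 - cT) * ∫ p : S × S, |r p.1 - r p.2| ∂(ρ.prod ρ) ∧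
    ((∫ p : S × S, |r p.1 - r p.2| ∂(ρ.prod ρ)) = 0 →
      (∫ p : S × S, bisimD f r cR cT p.1 p.2 ∂(ρ.prod ρ)) = 0) :=
  mean_bisim_eq_mean_reward_diff_general f hf r hrm hr cR cT hcT0 hcT1 ρ hinv
end

section
/- Second-moment bound for the bisimulation distance: assume f preserves the probability measure ρ and 2·c_T² < 1. Then ∫_{S×S} d(s,t)² dν(s,t) ≤ (2·c_R²/(1 − 2·c_T²)) · ∫_{S×S} |r(s) − r(t)|² dν(s,t), where ν := ρ × ρ is the product measure. -/
/-!
Writing `c_T ^ n = (√2 c_T) ^ n · (√2)⁻¹ ^ n` and applying Cauchy–Schwarz to the series gives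
the pointwise bound `d(s, t)² ≤ c_R² / (1 - 2 c_T²) · ∑ₙ 2⁻ⁿ |r (fⁿ s) - r (fⁿ t)|²`.
Since `f × f` preserves `ρ × ρ`, every term of the series integrates to `∫ |r s - r t|²`,
and `∑ₙ 2⁻ⁿ = 2`.
-/

open MeasureTheory

theorem tsum_mul_sq_le_tsum_sq_mul_tsum_sq {ι : Type*} {a b : ι → ℝ}
    (ha : Summable fun i => a i ^ 2) (hb : Summable fun i => b i ^ 2) :
    (∑' i, a i * b i) ^ 2 ≤ (∑' i, a i ^ 2) * ∑' i, b i ^ 2 := by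
  have hab : Summable fun i => a i * b i := by
    refine (ha.add hb).of_norm_bounded fun i => ?_
    rw [Real.norm_eq_abs, abs_mul]
    nlinarith [two_mul_le_add_sq |a i| |b i|, sq_abs (a i), sq_abs (b i)]
  refine le_of_tendsto' (hab.hasSum.pow 2) fun s => ?_
  calc (∑ i ∈ s, a i * b i) ^ 2 ≤ (∑ i ∈ s, a i ^ 2) * ∑ i ∈ s, b i ^ 2 :=
        Finset.sum_mul_sq_le_sq_mul_sq s a b
    _ ≤ (∑' i, a i ^ 2) * ∑' i, b i ^ 2 :=
        mul_le_mul (ha.sum_le_tsum s fun i _ => sq_nonneg _)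
          (hb.sum_le_tsum s fun i _ => sq_nonneg _)
          (Finset.sum_nonneg fun i _ => sq_nonneg _) (tsum_nonneg fun i => sq_nonneg _)

theorem sq_tsum_pow_mul_le {c : ℝ} (hc : 2 * c ^ 2 < 1) {x : ℕ → ℝ}
    (hx : Summable fun n => (1 / 2 : ℝ) ^ n * x n ^ 2) :
    (∑' n, c ^ n * x n) ^ 2 ≤ (1 - 2 * c ^ 2)⁻¹ * ∑' n, (1 / 2 : ℝ) ^ n * x n ^ 2 := by
  have hsqrt : √2 ^ 2 = 2 := Real.sq_sqrt (by norm_num)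
  have hsplit : ∀ n, c ^ n * x n = (√2 * c) ^ n * ((√2)⁻¹ ^ n * x n) := by
    intro n
    rw [← mul_assoc, ← mul_pow, mul_right_comm, mul_inv_cancel₀ (by positivity), one_mul]
  have ha : ∀ n, ((√2 * c) ^ n) ^ 2 = (2 * c ^ 2) ^ n := by
    intro n
    rw [← pow_mul, pow_mul', mul_pow, hsqrt]
  have hb : ∀ n, ((√2)⁻¹ ^ n * x n) ^ 2 = (1 / 2 : ℝ) ^ n * x n ^ 2 := by
    intro n
    rw [mul_pow, ← pow_mul, pow_mul', inv_pow, hsqrt, one_div]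
  have hgeom : HasSum (fun n => (2 * c ^ 2) ^ n) (1 - 2 * c ^ 2)⁻¹ :=
    hasSum_geometric_of_lt_one (by positivity) hc
  calc (∑' n, c ^ n * x n) ^ 2
      = (∑' n, (√2 * c) ^ n * ((√2)⁻¹ ^ n * x n)) ^ 2 := by simp_rw [hsplit]
    _ ≤ (∑' n, ((√2 * c) ^ n) ^ 2) * ∑' n, ((√2)⁻¹ ^ n * x n) ^ 2 :=
        tsum_mul_sq_le_tsum_sq_mul_tsum_sq (by simpa only [ha] using hgeom.summable)
          (by simpa only [hb] using hx)
    _ = (1 - 2 * c ^ 2)⁻¹ * ∑' n, (1 / 2 : ℝ) ^ n * x n ^ 2 := by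
        simp_rw [ha, hb, hgeom.tsum_eq]

theorem sq_bisimD_le {S : Type*} {f : S → S} {r : S → ℝ} {cR cT : ℝ} (hcT : 2 * cT ^ 2 < 1)
    {s t : S} (hsum : Summable fun n => (1 / 2 : ℝ) ^ n * |r (f^[n] s) - r (f^[n] t)| ^ 2) :
    bisimD f r cR cT s t ^ 2 ≤
      cR ^ 2 * ((1 - 2 * cT ^ 2)⁻¹ * ∑' n, (1 / 2 : ℝ) ^ n * |r (f^[n] s) - r (f^[n] t)| ^ 2) := by
  rw [bisimD, mul_pow]
  gcongr
  exact sq_tsum_pow_mul_le hcT hsum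

namespace MeasureTheory.MeasurePreserving

variable {X : Type*} [MeasurableSpace X] {μ : Measure X} {g : X → X} {h : X → ℝ}

theorem tsum_lintegral_enorm_mul_comp_iterate (hg : MeasurePreserving g μ μ)
    (hh : Measurable h) (w : ℕ → ℝ) :
    ∑' n, ∫⁻ x, ‖w n * h (g^[n] x)‖ₑ ∂μ = (∑' n, ‖w n‖ₑ) * ∫⁻ x, ‖h x‖ₑ ∂μ := by
  rw [← ENNReal.tsum_mul_right]
  congr with n
  simp_rw [enorm_mul]
  rw [lintegral_const_mul' _ _ enorm_ne_top, (hg.iterate n).lintegral_comp hh.enorm]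

theorem tsum_lintegral_enorm_mul_comp_iterate_ne_top (hg : MeasurePreserving g μ μ)
    (hh : Measurable h) (hi : Integrable h μ) {w : ℕ → ℝ} (hw : Summable w) :
    ∑' n, ∫⁻ x, ‖w n * h (g^[n] x)‖ₑ ∂μ ≠ ⊤ := by
  rw [hg.tsum_lintegral_enorm_mul_comp_iterate hh]
  exact ENNReal.mul_ne_top (tsum_enorm_ne_top_iff_summable_norm.2 hw.norm) hi.2.ne

theorem integrable_tsum_mul_comp_iterate (hg : MeasurePreserving g μ μ)
    (hh : Measurable h) (hi : Integrable h μ) {w : ℕ → ℝ} (hw : Summable w) :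
    Integrable (fun x => ∑' n, w n * h (g^[n] x)) μ := by
  have hmeas : ∀ n, Measurable fun x => w n * h (g^[n] x) := fun n =>
    measurable_const.mul (hh.comp (hg.measurable.iterate n))
  refine ⟨(Measurable.tsum hmeas).aestronglyMeasurable, ?_⟩
  calc ∫⁻ x, ‖∑' n, w n * h (g^[n] x)‖ₑ ∂μ
      ≤ ∫⁻ x, ∑' n, ‖w n * h (g^[n] x)‖ₑ ∂μ := lintegral_mono fun x => enorm_tsum_le_tsum_enorm
    _ = ∑' n, ∫⁻ x, ‖w n * h (g^[n] x)‖ₑ ∂μ :=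
        lintegral_tsum fun n => (hmeas n).enorm.aemeasurable
    _ < ⊤ := (hg.tsum_lintegral_enorm_mul_comp_iterate_ne_top hh hi hw).lt_top

theorem integral_tsum_mul_comp_iterate (hg : MeasurePreserving g μ μ)
    (hh : Measurable h) (hi : Integrable h μ) {w : ℕ → ℝ} (hw : Summable w) :
    ∫ x, ∑' n, w n * h (g^[n] x) ∂μ = (∑' n, w n) * ∫ x, h x ∂μ := by
  have hmeas : ∀ n, AEStronglyMeasurable (fun x => w n * h (g^[n] x)) μ := fun n =>
    (measurable_const.mul (hh.comp (hg.measurable.iterate n))).aestronglyMeasurable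
  rw [integral_tsum hmeas (hg.tsum_lintegral_enorm_mul_comp_iterate_ne_top hh hi hw),
    ← tsum_mul_right]
  congr with n
  rw [integral_const_mul, ← integral_map (hg.iterate n).measurable.aemeasurable
    hh.aestronglyMeasurable, (hg.iterate n).map_eq]

end MeasureTheory.MeasurePreserving

theorem second_moment_bisim_bound_general
    {S : Type*} [MeasurableSpace S]
    (f : S → S) (hf : Measurable f)
    (r : S → ℝ) (hrm : Measurable r) (hr : ∃ M, ∀ s, |r s| ≤ M)
    (cR cT : ℝ)
    (hcT2 : 2 * cT ^ 2 < 1)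
    (ρ : Measure S) [IsProbabilityMeasure ρ]
    (hinv : Measure.map f ρ = ρ) :
    (∫ p : S × S, (bisimD f r cR cT p.1 p.2) ^ 2 ∂(ρ.prod ρ)) ≤
      2 * cR ^ 2 / (1 - 2 * cT ^ 2) *
        ∫ p : S × S, |r p.1 - r p.2| ^ 2 ∂(ρ.prod ρ) := by
  obtain ⟨M, hM⟩ := hr
  set h : S × S → ℝ := fun p => |r p.1 - r p.2| ^ 2 with h_def
  have hg : MeasurePreserving (Prod.map f f) (ρ.prod ρ) (ρ.prod ρ) :=
    (MeasurePreserving.mk hf hinv).prod (MeasurePreserving.mk hf hinv)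
  have hh_meas : Measurable h := by fun_prop
  have hh_le : ∀ p, h p ≤ (2 * M) ^ 2 := fun p =>
    pow_le_pow_left₀ (abs_nonneg _) ((abs_sub _ _).trans (by linarith [hM p.1, hM p.2])) 2
  have hh_int : Integrable h (ρ.prod ρ) :=
    .of_bound hh_meas.aestronglyMeasurable _ (ae_of_all _ fun p => by
      rw [Real.norm_of_nonneg (by positivity)]; exact hh_le p)
  have hpoint : ∀ p : S × S, bisimD f r cR cT p.1 p.2 ^ 2 ≤
      cR ^ 2 * ((1 - 2 * cT ^ 2)⁻¹ * ∑' n, (1 / 2 : ℝ) ^ n * h ((Prod.map f f)^[n] p)) := by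
    intro p
    simp only [h_def, Prod.map_iterate, Prod.map_fst, Prod.map_snd]
    exact sq_bisimD_le hcT2 <| (summable_geometric_two.mul_right _).of_nonneg_of_le
      (fun n => by positivity)
      fun n => mul_le_mul_of_nonneg_left (hh_le (f^[n] p.1, f^[n] p.2)) (by positivity)
  calc (∫ p, bisimD f r cR cT p.1 p.2 ^ 2 ∂(ρ.prod ρ))
      ≤ ∫ p, cR ^ 2 * ((1 - 2 * cT ^ 2)⁻¹ *
          ∑' n, (1 / 2 : ℝ) ^ n * h ((Prod.map f f)^[n] p)) ∂(ρ.prod ρ) :=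
        integral_mono_of_nonneg (ae_of_all _ fun p => sq_nonneg _)
          (((hg.integrable_tsum_mul_comp_iterate hh_meas hh_int summable_geometric_two).const_mul
            _).const_mul _) (ae_of_all _ hpoint)
    _ = 2 * cR ^ 2 / (1 - 2 * cT ^ 2) * ∫ p, h p ∂(ρ.prod ρ) := by
        rw [integral_const_mul, integral_const_mul,
          hg.integral_tsum_mul_comp_iterate hh_meas hh_int summable_geometric_two,
          tsum_geometric_two]
        ring

/-- Second-moment bound for the bisimulation distance: if `f` preserves
the probability measure `ρ` and `2·c_T² < 1`, then
`∫ d² dν ≤ (2·c_R²/(1 − 2·c_T²)) · ∫ |r s − r t|² dν` with `ν = ρ × ρ`. -/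
theorem second_moment_bisim_bound
    {S : Type*} [MeasurableSpace S] [Nonempty S]
    (f : S → S) (hf : Measurable f)
    (r : S → ℝ) (hrm : Measurable r) (hr : ∃ M, ∀ s, |r s| ≤ M)
    (cR cT : ℝ) (hcR : 0 ≤ cR) (hcT0 : 0 ≤ cT) (hcT1 : cT < 1)
    (hcT2 : 2 * cT ^ 2 < 1)
    (ρ : Measure S) [IsProbabilityMeasure ρ]
    (hinv : Measure.map f ρ = ρ) :
    (∫ p : S × S, (bisimD f r cR cT p.1 p.2) ^ 2 ∂(ρ.prod ρ)) ≤
      2 * cR ^ 2 / (1 - 2 * cT ^ 2) *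
        ∫ p : S × S, |r p.1 - r p.2| ^ 2 ∂(ρ.prod ρ) :=
  second_moment_bisim_bound_general f hf r hrm hr cR cT hcT2 ρ hinv
end

section
/- On-policy variance bound: assume f preserves the probability measure ρ and c_T ∈ [0, √(1/2)), i.e., 2·c_T² < 1. Define ν := ρ × ρ, the means μ_bd := ∫ d dν and μ_rd := ∫ |r(s) − r(t)| dν, and the variances σ_bd² := ∫ d² dν − μ_bd² and σ_rd² := ∫ |r(s) − r(t)|² dν − μ_rd². Then σ_bd² ≤ (2·c_R²/(1 − 2·c_T²))·σ_rd² + (c_R²·(1 − 2·c_T)²/((1 − 2·c_T²)·(1 − c_T)²))·μ_rd². -/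
open MeasureTheory

theorem sq_tsum_le_tsum_mul_tsum_of_sq_le_mul {ι : Type*} {r u v : ι → ℝ}
    (hu : ∀ i, 0 ≤ u i) (hv : ∀ i, 0 ≤ v i) (hruv : ∀ i, r i ^ 2 ≤ u i * v i)
    (hr : Summable r) (hus : Summable u) (hvs : Summable v) :
    (∑' i, r i) ^ 2 ≤ (∑' i, u i) * ∑' i, v i :=
  le_of_tendsto_of_tendsto' (hr.hasSum.pow 2) (Filter.Tendsto.mul hus.hasSum hvs.hasSum) fun s =>
    Finset.sum_sq_le_sum_mul_sum_of_sq_le_mul s (fun i _ => hu i) (fun i _ => hv i)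
      fun i _ => hruv i

theorem sq_tsum_pow_mul_le_s13 {c : ℝ} (hc0 : 0 ≤ c) (hc1 : c < 1) {a : ℕ → ℝ} {C : ℝ}
    (ha : ∀ n, |a n| ≤ C) :
    (∑' n, c ^ n * a n) ^ 2 ≤ (1 - c)⁻¹ * ∑' n, c ^ n * a n ^ 2 := by
  have hgeom := summable_geometric_of_lt_one hc0 hc1
  rw [← tsum_geometric_of_lt_one hc0 hc1]
  refine sq_tsum_le_tsum_mul_tsum_of_sq_le_mul (fun n => pow_nonneg hc0 n)
    (fun n => by positivity) (fun n => le_of_eq (by ring)) ?_ hgeom ?_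
  · refine (hgeom.mul_right C).of_norm_bounded fun n => ?_
    rw [norm_mul, Real.norm_of_nonneg (pow_nonneg hc0 n)]
    exact mul_le_mul_of_nonneg_left (ha n) (pow_nonneg hc0 n)
  · refine (hgeom.mul_right (C ^ 2)).of_nonneg_of_le (fun n => by positivity) fun n => ?_
    exact mul_le_mul_of_nonneg_left (sq_le_sq' (abs_le.1 (ha n)).1 (abs_le.1 (ha n)).2)
      (pow_nonneg hc0 n)

theorem mul_inv_one_sub_sq_sub_le {c k A B : ℝ} (hc1 : c < 1) (hc2 : 2 * c ^ 2 < 1)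
    (hA : 0 ≤ A) :
    k ^ 2 * ((1 - c)⁻¹ ^ 2 * A) - (k * ((1 - c)⁻¹ * B)) ^ 2 ≤
      2 * k ^ 2 / (1 - 2 * c ^ 2) * (A - B ^ 2) +
        k ^ 2 * (1 - 2 * c) ^ 2 / ((1 - 2 * c ^ 2) * (1 - c) ^ 2) * B ^ 2 := by
  have h1 : 0 < 1 - 2 * c ^ 2 := by linarith
  have h2 : 1 - c ≠ 0 := by linarith
  have hgap : 2 * k ^ 2 / (1 - 2 * c ^ 2) * (A - B ^ 2) +
        k ^ 2 * (1 - 2 * c) ^ 2 / ((1 - 2 * c ^ 2) * (1 - c) ^ 2) * B ^ 2 -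
      (k ^ 2 * ((1 - c)⁻¹ ^ 2 * A) - (k * ((1 - c)⁻¹ * B)) ^ 2) =
      k ^ 2 * (1 - 2 * c) ^ 2 / ((1 - 2 * c ^ 2) * (1 - c) ^ 2) * A := by
    field_simp
    ring
  have : 0 ≤ k ^ 2 * (1 - 2 * c) ^ 2 / ((1 - 2 * c ^ 2) * (1 - c) ^ 2) * A := by positivity
  linarith

namespace MeasureTheory

variable {X : Type*} [MeasurableSpace X] {μ : Measure X}

theorem Integrable.tsum_of_norm_le [IsFiniteMeasure μ] {u : ℕ → X → ℝ}
    (hu : ∀ n, Measurable (u n)) {b : ℕ → ℝ} (hb : Summable b) (hub : ∀ n x, ‖u n x‖ ≤ b n) :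
    Integrable (fun x => ∑' n, u n x) μ :=
  Integrable.of_bound (Measurable.tsum hu).aestronglyMeasurable (∑' n, b n)
    (ae_of_all _ fun x => tsum_of_norm_bounded hb.hasSum (hub · x))

theorem MeasurePreserving.integral_comp_of_aestronglyMeasurable_s13 {Y E : Type*}
    [MeasurableSpace Y] [NormedAddCommGroup E] [NormedSpace ℝ E] {ν : Measure Y} {f : X → Y}
    (hf : MeasurePreserving f μ ν) {g : Y → E} (hg : AEStronglyMeasurable g ν) :
    ∫ x, g (f x) ∂μ = ∫ y, g y ∂ν := by
  rw [← hf.map_eq] at hg ⊢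
  exact (integral_map hf.measurable.aemeasurable hg).symm

variable {F : X → X}

theorem MeasurePreserving.integral_tsum_pow_mul_comp_iterate (hF : MeasurePreserving F μ μ)
    {h : X → ℝ} (hh : Integrable h μ) {c : ℝ} (hc : |c| < 1) :
    ∫ x, ∑' n, c ^ n * h (F^[n] x) ∂μ = (1 - c)⁻¹ * ∫ x, h x ∂μ := by
  have hint (n : ℕ) : Integrable (fun x => c ^ n * h (F^[n] x)) μ :=
    ((hF.iterate n).integrable_comp_of_integrable hh).const_mul _
  have hnorm (n : ℕ) : ∫ x, ‖c ^ n * h (F^[n] x)‖ ∂μ = |c| ^ n * ∫ x, ‖h x‖ ∂μ := by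
    simp_rw [norm_mul, norm_pow, Real.norm_eq_abs c]
    rw [integral_const_mul,
      (hF.iterate n).integral_comp_of_aestronglyMeasurable_s13 (g := fun x => ‖h x‖) hh.norm.1]
  rw [← integral_tsum_of_summable_integral_norm hint]
  · simp_rw [integral_const_mul,
      fun n => (hF.iterate n).integral_comp_of_aestronglyMeasurable_s13 hh.1]
    rw [tsum_mul_right, tsum_geometric_of_abs_lt_one hc]
  · simp_rw [hnorm]
    exact (summable_geometric_of_lt_one (abs_nonneg c) hc).mul_right _

theorem MeasurePreserving.integral_sq_tsum_pow_mul_comp_iterate_le [IsFiniteMeasure μ]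
    (hF : MeasurePreserving F μ μ) {g : X → ℝ} (hg : Measurable g) {C : ℝ}
    (hgC : ∀ x, |g x| ≤ C) {c : ℝ} (hc0 : 0 ≤ c) (hc1 : c < 1) :
    ∫ x, (∑' n, c ^ n * g (F^[n] x)) ^ 2 ∂μ ≤ (1 - c)⁻¹ ^ 2 * ∫ x, g x ^ 2 ∂μ := by
  have hgeom := summable_geometric_of_lt_one hc0 hc1
  have hsq : Integrable (fun x => g x ^ 2) μ :=
    Integrable.of_bound (hg.pow_const 2).aestronglyMeasurable (C ^ 2) (ae_of_all _ fun x => by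
      rw [Real.norm_eq_abs, abs_pow]
      exact pow_le_pow_left₀ (abs_nonneg _) (hgC x) 2)
  have hbound : Integrable (fun x => ∑' n, c ^ n * g (F^[n] x) ^ 2) μ := by
    refine Integrable.tsum_of_norm_le (fun n => measurable_const.mul
      ((hg.comp (hF.iterate n).measurable).pow_const 2)) (hgeom.mul_right (C ^ 2)) fun n x => ?_
    rw [Real.norm_eq_abs, abs_mul, abs_pow, abs_pow, abs_of_nonneg hc0]
    exact mul_le_mul_of_nonneg_left (pow_le_pow_left₀ (abs_nonneg _) (hgC _) 2)
      (pow_nonneg hc0 n)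
  calc ∫ x, (∑' n, c ^ n * g (F^[n] x)) ^ 2 ∂μ
      ≤ ∫ x, (1 - c)⁻¹ * ∑' n, c ^ n * g (F^[n] x) ^ 2 ∂μ :=
        integral_mono_of_nonneg (ae_of_all _ fun x => sq_nonneg _) (hbound.const_mul _)
          (ae_of_all _ fun x => sq_tsum_pow_mul_le_s13 hc0 hc1 fun n => hgC _)
    _ = (1 - c)⁻¹ ^ 2 * ∫ x, g x ^ 2 ∂μ := by
        rw [integral_const_mul, hF.integral_tsum_pow_mul_comp_iterate (h := fun x => g x ^ 2) hsq
          (by rwa [abs_of_nonneg hc0]), ← mul_assoc, sq]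

end MeasureTheory

theorem onpolicy_variance_bound_general
    {S : Type*} [MeasurableSpace S]
    (f : S → S) (hf : Measurable f)
    (r : S → ℝ) (hrm : Measurable r) (hr : ∃ M, ∀ s, |r s| ≤ M)
    (cR cT : ℝ) (hcT0 : 0 ≤ cT) (hcT1 : cT < 1)
    (hcT2 : 2 * cT ^ 2 < 1)
    (ρ : Measure S) [IsProbabilityMeasure ρ]
    (hinv : Measure.map f ρ = ρ) :
    (∫ p : S × S, (bisimD f r cR cT p.1 p.2) ^ 2 ∂(ρ.prod ρ)) -
        (∫ p : S × S, bisimD f r cR cT p.1 p.2 ∂(ρ.prod ρ)) ^ 2 ≤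
      2 * cR ^ 2 / (1 - 2 * cT ^ 2) *
          ((∫ p : S × S, |r p.1 - r p.2| ^ 2 ∂(ρ.prod ρ)) -
            (∫ p : S × S, |r p.1 - r p.2| ∂(ρ.prod ρ)) ^ 2) +
        cR ^ 2 * (1 - 2 * cT) ^ 2 / ((1 - 2 * cT ^ 2) * (1 - cT) ^ 2) *
          (∫ p : S × S, |r p.1 - r p.2| ∂(ρ.prod ρ)) ^ 2 := by
  obtain ⟨M, hM⟩ := hr
  set g : S × S → ℝ := fun p => |r p.1 - r p.2|
  have hfρ : MeasurePreserving f ρ ρ := ⟨hf, hinv⟩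
  have hF := hfρ.prod hfρ
  have hgm : Measurable g := by fun_prop
  have hgC (p : S × S) : |g p| ≤ 2 * M := by
    rw [abs_abs]
    linarith [abs_sub (r p.1) (r p.2), hM p.1, hM p.2]
  have hbisim (p : S × S) :
      bisimD f r cR cT p.1 p.2 = cR * ∑' n, cT ^ n * g ((Prod.map f f)^[n] p) := by
    simp [bisimD, g]
  have hmean := hF.integral_tsum_pow_mul_comp_iterate
    (Integrable.of_bound hgm.aestronglyMeasurable _ (ae_of_all _ hgC))
    (by rwa [abs_of_nonneg hcT0])
  have hsecond := hF.integral_sq_tsum_pow_mul_comp_iterate_le hgm hgC hcT0 hcT1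
  simp_rw [hbisim, mul_pow, integral_const_mul, hmean]
  exact (sub_le_sub_right (mul_le_mul_of_nonneg_left hsecond (sq_nonneg cR)) _).trans
    (mul_inv_one_sub_sq_sub_le hcT1 hcT2 (integral_nonneg fun p => sq_nonneg _))

/-- On-policy variance bound: if `f` preserves the probability measure
`ρ` and `2·c_T² < 1`, then with `ν = ρ × ρ`, `μ_bd = ∫ d dν`, `μ_rd = ∫ |r s − r t| dν`,
`σ_bd² = ∫ d² dν − μ_bd²` and `σ_rd² = ∫ |r s − r t|² dν − μ_rd²`, one has
`σ_bd² ≤ (2·c_R²/(1 − 2·c_T²))·σ_rd² + (c_R²·(1 − 2·c_T)²/((1 − 2·c_T²)·(1 − c_T)²))·μ_rd²`. -/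
theorem onpolicy_variance_bound
    {S : Type*} [MeasurableSpace S] [Nonempty S]
    (f : S → S) (hf : Measurable f)
    (r : S → ℝ) (hrm : Measurable r) (hr : ∃ M, ∀ s, |r s| ≤ M)
    (cR cT : ℝ) (hcR : 0 ≤ cR) (hcT0 : 0 ≤ cT) (hcT1 : cT < 1)
    (hcT2 : 2 * cT ^ 2 < 1)
    (ρ : Measure S) [IsProbabilityMeasure ρ]
    (hinv : Measure.map f ρ = ρ) :
    (∫ p : S × S, (bisimD f r cR cT p.1 p.2) ^ 2 ∂(ρ.prod ρ)) -
        (∫ p : S × S, bisimD f r cR cT p.1 p.2 ∂(ρ.prod ρ)) ^ 2 ≤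
      2 * cR ^ 2 / (1 - 2 * cT ^ 2) *
          ((∫ p : S × S, |r p.1 - r p.2| ^ 2 ∂(ρ.prod ρ)) -
            (∫ p : S × S, |r p.1 - r p.2| ∂(ρ.prod ρ)) ^ 2) +
        cR ^ 2 * (1 - 2 * cT) ^ 2 / ((1 - 2 * cT ^ 2) * (1 - cT) ^ 2) *
          (∫ p : S × S, |r p.1 - r p.2| ∂(ρ.prod ρ)) ^ 2 :=
  onpolicy_variance_bound_general f hf r hrm hr cR cT hcT0 hcT1 hcT2 ρ hinv
end

section
/- Bisimulation distance error with approximate dynamics: let f̂ : S → S be an approximate transition map and r̂ : S → ℝ an approximate bounded reward function, and let d̂ be the bisimulation metric built from f̂ and r̂, i.e., d̂(s,t) := c_R · ∑_{n=0}^∞ c_T^n · |r̂(f̂^n(s)) − r̂(f̂^n(t))|. Suppose ε_r ≥ 0 and ε_P ≥ 0 satisfy |r̂(s) − r(s)| ≤ ε_r for all s ∈ S and d(f(s), f̂(s)) ≤ ε_P for all s ∈ S. Then for all s, t ∈ S, |d(s,t) − d̂(s,t)| ≤ (2·c_R·ε_r)/(1 − c_T) + (2·c_T·ε_P)/(1 −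 c_T). -/
open Set

theorem le_div_one_sub_of_forall_le_mul_add {ι : Type*} {δ : ι → ℝ} {c e : ℝ}
    (hδ : BddAbove (range δ)) (hc : c < 1)
    (h : ∀ B, (∀ j, δ j ≤ B) → ∀ i, δ i ≤ c * B + e) (i : ι) :
    δ i ≤ e / (1 - c) := by
  have : Nonempty ι := ⟨i⟩
  have hsup : iSup δ ≤ c * iSup δ + e := ciSup_le (h _ (le_ciSup hδ))
  calc δ i ≤ iSup δ := le_ciSup hδ i
    _ ≤ e / (1 - c) := by rw [le_div_iff₀ (by linarith)]; linarith

section bisimD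

variable {S : Type*} {f : S → S} {r : S → ℝ} {cR cT M : ℝ}

lemma bisimD_term_le (hr : ∀ s, |r s| ≤ M) (hcT0 : 0 ≤ cT) (n : ℕ) (x y : S) :
    cT ^ n * |r x - r y| ≤ cT ^ n * (2 * M) := by
  gcongr
  linarith [abs_sub (r x) (r y), hr x, hr y]

lemma summable_bisimD_terms (hr : ∀ s, |r s| ≤ M) (hcT0 : 0 ≤ cT) (hcT1 : cT < 1)
    (s t : S) : Summable fun n : ℕ => cT ^ n * |r (f^[n] s) - r (f^[n] t)| :=
  Summable.of_nonneg_of_le (fun n => by positivity) (fun n => bisimD_term_le hr hcT0 n _ _)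
    ((summable_geometric_of_lt_one hcT0 hcT1).mul_right _)

lemma abs_bisimD_le (hr : ∀ s, |r s| ≤ M) (hcR : 0 ≤ cR) (hcT0 : 0 ≤ cT) (hcT1 : cT < 1)
    (s t : S) : |bisimD f r cR cT s t| ≤ cR * (2 * M / (1 - cT)) := by
  have hsum : ∑' n : ℕ, cT ^ n * (2 * M) = 2 * M / (1 - cT) := by
    rw [tsum_mul_right, tsum_geometric_of_lt_one hcT0 hcT1, inv_mul_eq_div]
  unfold bisimD
  rw [abs_of_nonneg (mul_nonneg hcR (tsum_nonneg fun n => by positivity)), ← hsum]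
  gcongr ?_ * ?_
  exact (summable_bisimD_terms hr hcT0 hcT1 s t).tsum_le_tsum
    (fun n => bisimD_term_le hr hcT0 n _ _) ((summable_geometric_of_lt_one hcT0 hcT1).mul_right _)

lemma bisimD_comm (s t : S) : bisimD f r cR cT s t = bisimD f r cR cT t s := by
  simp only [bisimD, abs_sub_comm (r (f^[_] s))]

lemma bisimD_eq_add (hr : ∀ s, |r s| ≤ M) (hcT0 : 0 ≤ cT) (hcT1 : cT < 1) (s t : S) :
    bisimD f r cR cT s t = cR * |r s - r t| + cT * bisimD f r cR cT (f s) (f t) := by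
  rw [bisimD, bisimD, (summable_bisimD_terms hr hcT0 hcT1 s t).tsum_eq_zero_add]
  simp only [pow_zero, one_mul, Function.iterate_zero_apply, pow_succ',
    Function.iterate_succ_apply, mul_assoc, tsum_mul_left]
  ring

lemma bisimD_triangle (hr : ∀ s, |r s| ≤ M) (hcR : 0 ≤ cR) (hcT0 : 0 ≤ cT) (hcT1 : cT < 1)
    (s u t : S) :
    bisimD f r cR cT s t ≤ bisimD f r cR cT s u + bisimD f r cR cT u t := by
  have hsu := summable_bisimD_terms (f := f) hr hcT0 hcT1 s u
  have hut := summable_bisimD_terms (f := f) hr hcT0 hcT1 u t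
  unfold bisimD
  rw [← mul_add, ← hsu.tsum_add hut]
  gcongr ?_ * ?_
  refine (summable_bisimD_terms hr hcT0 hcT1 s t).tsum_le_tsum (fun n => ?_) (hsu.add hut)
  rw [← mul_add]
  gcongr
  exact abs_sub_le _ _ _

lemma abs_bisimD_sub_bisimD_le (hr : ∀ s, |r s| ≤ M) (hcR : 0 ≤ cR) (hcT0 : 0 ≤ cT)
    (hcT1 : cT < 1) (a b a' b' : S) :
    |bisimD f r cR cT a b - bisimD f r cR cT a' b'| ≤
      bisimD f r cR cT a a' + bisimD f r cR cT b b' := by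
  set d := bisimD f r cR cT
  have htri : ∀ x y z, d x z ≤ d x y + d y z := bisimD_triangle hr hcR hcT0 hcT1
  have hcomm : ∀ x y, d x y = d y x := bisimD_comm
  rw [abs_sub_le_iff]
  constructor
  · linarith [htri a a' b, htri a' b' b, hcomm b' b]
  · linarith [htri a' a b', htri a b b', hcomm a' a]

lemma abs_bisimD_sub_bisimD_le_mul_add {fhat : S → S} {rhat : S → ℝ} {Mhat εr εP B : ℝ}
    (hr : ∀ s, |r s| ≤ M) (hrhat : ∀ s, |rhat s| ≤ Mhat) (hcR : 0 ≤ cR) (hcT0 : 0 ≤ cT)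
    (hcT1 : cT < 1) (hrerr : ∀ s, |rhat s - r s| ≤ εr)
    (hPerr : ∀ s, bisimD f r cR cT (f s) (fhat s) ≤ εP)
    (hB : ∀ s t, |bisimD f r cR cT s t - bisimD fhat rhat cR cT s t| ≤ B) (s t : S) :
    |bisimD f r cR cT s t - bisimD fhat rhat cR cT s t| ≤
      cT * B + (2 * cR * εr + 2 * cT * εP) := by
  set d := bisimD f r cR cT
  set dhat := bisimD fhat rhat cR cT
  have hreward : |(|r s - r t| - |rhat s - rhat t|)| ≤ 2 * εr := by
    refine (abs_abs_sub_abs_le_abs_sub _ _).trans ?_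
    rw [show r s - r t - (rhat s - rhat t) = (rhat t - r t) - (rhat s - r s) by ring]
    linarith [abs_sub (rhat t - r t) (rhat s - r s), hrerr s, hrerr t]
  have hnext : |d (f s) (f t) - dhat (fhat s) (fhat t)| ≤ 2 * εP + B := by
    have hmove : |d (f s) (f t) - d (fhat s) (fhat t)| ≤ 2 * εP := by
      linarith [hPerr s, hPerr t,
        abs_bisimD_sub_bisimD_le (f := f) hr hcR hcT0 hcT1 (f s) (f t) (fhat s) (fhat t)]
    linarith [abs_sub_le (d (f s) (f t)) (d (fhat s) (fhat t)) (dhat (fhat s) (fhat t)),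
      hB (fhat s) (fhat t)]
  have hd : d s t = cR * |r s - r t| + cT * d (f s) (f t) := bisimD_eq_add hr hcT0 hcT1 s t
  have hdhat : dhat s t = cR * |rhat s - rhat t| + cT * dhat (fhat s) (fhat t) :=
    bisimD_eq_add hrhat hcT0 hcT1 s t
  have hsplit : d s t - dhat s t = cR * (|r s - r t| - |rhat s - rhat t|)
      + cT * (d (f s) (f t) - dhat (fhat s) (fhat t)) := by
    rw [hd, hdhat]; ring
  rw [hsplit]
  refine (abs_add_le _ _).trans ?_
  rw [abs_mul, abs_mul, abs_of_nonneg hcR, abs_of_nonneg hcT0]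
  linarith [mul_le_mul_of_nonneg_left hreward hcR, mul_le_mul_of_nonneg_left hnext hcT0]

end bisimD

theorem bisim_distance_model_error_general
    {S : Type*} (f : S → S) (r : S → ℝ)
    (hr : ∃ M, ∀ s, |r s| ≤ M)
    (cR cT : ℝ) (hcR : 0 ≤ cR) (hcT0 : 0 ≤ cT) (hcT1 : cT < 1)
    (fhat : S → S) (rhat : S → ℝ)
    (εr εP : ℝ)
    (hrerr : ∀ s, |rhat s - r s| ≤ εr)
    (hPerr : ∀ s, bisimD f r cR cT (f s) (fhat s) ≤ εP) :
    ∀ s t : S, |bisimD f r cR cT s t - bisimD fhat rhat cR cT s t| ≤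
      2 * cR * εr / (1 - cT) + 2 * cT * εP / (1 - cT) := by
  obtain ⟨M, hM⟩ := hr
  have hMhat : ∀ s, |rhat s| ≤ M + εr := fun s => by
    linarith [abs_sub_abs_le_abs_sub (rhat s) (r s), hrerr s, hM s]
  have hbdd : BddAbove (range fun p : S × S =>
      |bisimD f r cR cT p.1 p.2 - bisimD fhat rhat cR cT p.1 p.2|) := by
    refine ⟨cR * (2 * M / (1 - cT)) + cR * (2 * (M + εr) / (1 - cT)), ?_⟩
    rintro _ ⟨p, rfl⟩
    exact (abs_sub _ _).trans (add_le_add (abs_bisimD_le hM hcR hcT0 hcT1 _ _)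
      (abs_bisimD_le hMhat hcR hcT0 hcT1 _ _))
  intro s t
  rw [← add_div]
  exact le_div_one_sub_of_forall_le_mul_add hbdd hcT1 (fun B hB p =>
    abs_bisimD_sub_bisimD_le_mul_add hM hMhat hcR hcT0 hcT1 hrerr hPerr
      (fun s t => hB (s, t)) p.1 p.2) (s, t)

/-- Bisimulation distance error with approximate dynamics: if
`|r̂ s − r s| ≤ ε_r` and `d(f s, f̂ s) ≤ ε_P` for all `s`, then for all `s, t`,
`|d(s,t) − d̂(s,t)| ≤ (2·c_R·ε_r)/(1 − c_T) + (2·c_T·ε_P)/(1 − c_T)`, where `d̂` is the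
bisimulation metric built from the approximate dynamics `f̂` and reward `r̂`. -/
theorem bisim_distance_model_error
    {S : Type*} [Nonempty S] (f : S → S) (r : S → ℝ)
    (hr : ∃ M, ∀ s, |r s| ≤ M)
    (cR cT : ℝ) (hcR : 0 ≤ cR) (hcT0 : 0 ≤ cT) (hcT1 : cT < 1)
    (fhat : S → S) (rhat : S → ℝ) (hrhat : ∃ M, ∀ s, |rhat s| ≤ M)
    (εr εP : ℝ) (hεr : 0 ≤ εr) (hεP : 0 ≤ εP)
    (hrerr : ∀ s, |rhat s - r s| ≤ εr)
    (hPerr : ∀ s, bisimD f r cR cT (f s) (fhat s) ≤ εP) :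
    ∀ s t : S, |bisimD f r cR cT s t - bisimD fhat rhat cR cT s t| ≤
      2 * cR * εr / (1 - cT) + 2 * cT * εP / (1 - cT) :=
  bisim_distance_model_error_general f r hr cR cT hcR hcT0 hcT1 fhat rhat εr εP hrerr hPerr
end
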